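/- For every natural number m, the sum over l from 0 to m of C(m,l) · (l-2)! · (m-l-2)! is at most 24 · (m-2)!, where by convention k! = 1 for k ≤ 0. -/
import Mathlib
open Nat Finset

noncomputable def gq (l : ℕ) : ℚ := 1 / ((l : ℚ) * ((l : ℚ) - 1))

lemma tele (k : ℕ) : ∑ l ∈ Finset.Ico 2 (k + 2), gq l = 1 - 1 / ((k : ℚ) + 1) := by
  induction k with
  | zero => simp
  | succ n ih =>
    have h1 : ((n : ℚ) + 1) ≠ 0 := by positivity
    have h2 : ((n : ℚ) + 2) ≠ 0 := by positivity
    rw [show n + 1 + 2 = (n + 2) + 1 from rfl, Finset.sum_Ico_succ_top (by omega), ih]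
    have hgq : gq (n + 2) = 1 / ((n : ℚ) + 1) - 1 / ((n : ℚ) + 2) := by
      unfold gq
      push_cast
      have hE : ((n : ℚ) + 2) * (((n : ℚ) + 2) - 1) = ((n : ℚ) + 2) * ((n : ℚ) + 1) := by ring
      rw [hE, div_sub_div _ _ h1 h2, div_eq_div_iff (by positivity) (by positivity)]
      ring
    rw [hgq]
    push_cast
    field_simp
    ring

lemma term_bound (a b : ℕ) :
    (((a + b + 4).choose (a + 2) * a.factorial * b.factorial : ℕ) : ℚ) ≤
    8 * ((a + b + 2).factorial : ℚ) *
      (1 / (((a : ℚ) + 2) * ((a : ℚ) + 1)) + 1 / (((b : ℚ) + 2) * ((b : ℚ) + 1))) := by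
  have hnat : (a + b + 4).factorial ≤
      8 * (a + b + 2).factorial * ((b + 2) * (b + 1) + (a + 2) * (a + 1)) := by
    have h1 : (a + b + 4).factorial = (a + b + 4) * ((a + b + 3) * (a + b + 2).factorial) := by
      rfl
    rw [h1]
    have h2 : (a + b + 4) * (a + b + 3) ≤ 8 * ((b + 2) * (b + 1) + (a + 2) * (a + 1)) := by
      nlinarith [two_mul_le_add_sq a b]
    calc (a + b + 4) * ((a + b + 3) * (a + b + 2).factorial)
        = (a + b + 4) * (a + b + 3) * (a + b + 2).factorial := by ring
      _ ≤ 8 * ((b + 2) * (b + 1) + (a + 2) * (a + 1)) * (a + b + 2).factorial :=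
          Nat.mul_le_mul_right _ h2
      _ = 8 * (a + b + 2).factorial * ((b + 2) * (b + 1) + (a + 2) * (a + 1)) := by ring
  have hid : ((a + b + 4).choose (a + 2) * a.factorial * b.factorial) *
      ((a + 2) * (a + 1) * ((b + 2) * (b + 1))) = (a + b + 4).factorial := by
    have h := Nat.choose_mul_factorial_mul_factorial (show a + 2 ≤ a + b + 4 by omega)
    have hsub : a + b + 4 - (a + 2) = b + 2 := by omega
    rw [hsub] at h
    calc ((a + b + 4).choose (a + 2) * a.factorial * b.factorial) *
        ((a + 2) * (a + 1) * ((b + 2) * (b + 1)))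
        = (a + b + 4).choose (a + 2) * ((a + 2) * ((a + 1) * a.factorial)) *
            ((b + 2) * ((b + 1) * b.factorial)) := by ring
      _ = (a + b + 4).choose (a + 2) * (a + 2).factorial * (b + 2).factorial := by
          rw [show (a+2) * ((a+1) * a.factorial) = (a+2).factorial from rfl,
              show (b+2) * ((b+1) * b.factorial) = (b+2).factorial from rfl]
      _ = (a + b + 4).factorial := h
  have hX : (0 : ℚ) < ((a : ℚ) + 2) * ((a : ℚ) + 1) := by positivity
  have hY : (0 : ℚ) < ((b : ℚ) + 2) * ((b : ℚ) + 1) := by positivity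
  rw [div_add_div _ _ (ne_of_gt hX) (ne_of_gt hY), ← mul_div_assoc, le_div_iff₀ (by positivity)]
  have hq : (((a + b + 4).factorial : ℕ) : ℚ) ≤
      ((8 * (a + b + 2).factorial * ((b + 2) * (b + 1) + (a + 2) * (a + 1)) : ℕ) : ℚ) := by
    exact_mod_cast hnat
  calc (((a + b + 4).choose (a + 2) * a.factorial * b.factorial : ℕ) : ℚ) *
      ((((a : ℚ) + 2) * ((a : ℚ) + 1)) * (((b : ℚ) + 2) * ((b : ℚ) + 1)))
      = (((a + b + 4).choose (a + 2) * a.factorial * b.factorial *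
          ((a + 2) * (a + 1) * ((b + 2) * (b + 1))) : ℕ) : ℚ) := by push_cast; ring
    _ = (((a + b + 4).factorial : ℕ) : ℚ) := by rw [hid]
    _ ≤ ((8 * (a + b + 2).factorial * ((b + 2) * (b + 1) + (a + 2) * (a + 1)) : ℕ) : ℚ) := hq
    _ = 8 * ((a + b + 2).factorial : ℚ) *
        (1 * (((b : ℚ) + 2) * ((b : ℚ) + 1)) + ((a : ℚ) + 2) * ((a : ℚ) + 1) * 1) := by
        push_cast; ring

theorem sum_choose_factorial_le (m : ℕ) :
    ∑ l ∈ Finset.range (m + 1), m.choose l * (l - 2)! * (m - l - 2)! ≤ 24 * (m - 2)! := by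
  obtain hm | hm := lt_or_ge m 3
  · interval_cases m <;> decide
  · obtain ⟨k, rfl⟩ : ∃ k, m = k + 3 := ⟨m - 3, by omega⟩
    set f : ℕ → ℕ := fun l => (k + 3).choose l * (l - 2)! * (k + 3 - l - 2)! with hf
    have hsub : k + 3 - 2 = k + 1 := by omega
    rw [hsub]
    have hpeel : ∑ l ∈ Finset.range (k + 3 + 1), f l
        = f 0 + f 1 + (∑ l ∈ Finset.Ico 2 (k + 2), f l) + f (k + 2) + f (k + 3) := by
      rw [show k + 3 + 1 = (k + 2) + 1 + 1 from rfl, Finset.sum_range_succ,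
        Finset.sum_range_succ, Finset.range_eq_Ico,
        ← Finset.sum_Ico_consecutive _ (by omega : 0 ≤ 2) (by omega : 2 ≤ k + 2),
        show Finset.Ico 0 2 = {0, 1} from by decide,
        Finset.sum_insert (by decide), Finset.sum_singleton]
    have hf0 : f 0 = (k + 1)! := by simp [hf]
    have hf1 : f 1 = (k + 3) * k ! := by simp [hf]
    have hfk2 : f (k + 2) = (k + 3) * k ! := by
      simp [hf, Nat.choose_succ_self_right, show k + 2 - 2 = k from by omega,
        show k + 3 - (k + 2) - 2 = 0 from by omega]
    have hfk3 : f (k + 3) = (k + 1)! := by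
      simp [hf, show k + 3 - 2 = k + 1 from by omega, show k + 3 - (k + 3) - 2 = 0 from by omega]
    have hmid : ∑ l ∈ Finset.Ico 2 (k + 2), f l ≤ 16 * (k + 1)! := by
      have hqle : ((∑ l ∈ Finset.Ico 2 (k + 2), f l : ℕ) : ℚ) ≤ 16 * (((k + 1)! : ℕ) : ℚ) := by
        push_cast
        have hterm : ∀ l ∈ Finset.Ico 2 (k + 2),
            ((f l : ℕ) : ℚ) ≤ 8 * (((k + 1)! : ℕ) : ℚ) * (gq l + gq (k + 3 - l)) := by
          intro l hl
          simp only [Finset.mem_Ico] at hl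
          obtain ⟨a, rfl⟩ : ∃ a, l = a + 2 := ⟨l - 2, by omega⟩
          obtain ⟨b, rfl⟩ : ∃ b, k = a + 1 + b := ⟨k - a - 1, by omega⟩
          have h1 : f (a + 2) = (a + b + 4).choose (a + 2) * a ! * b ! := by
            simp only [hf]
            rw [show a + 2 - 2 = a from by omega,
              show a + 1 + b + 3 - (a + 2) - 2 = b from by omega,
              show a + 1 + b + 3 = a + b + 4 from by omega]
          have hga : gq (a + 2) = 1 / (((a : ℚ) + 2) * ((a : ℚ) + 1)) := by
            unfold gq; push_cast; congr 1; ring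
          have hgb : gq (a + 1 + b + 3 - (a + 2)) = 1 / (((b : ℚ) + 2) * ((b : ℚ) + 1)) := by
            rw [show a + 1 + b + 3 - (a + 2) = b + 2 from by omega]
            unfold gq; push_cast; congr 1; ring
          rw [h1, hga, hgb, show a + 1 + b + 1 = a + b + 2 from by omega]
          exact term_bound a b
        calc ∑ l ∈ Finset.Ico 2 (k + 2), ((f l : ℕ) : ℚ)
            ≤ ∑ l ∈ Finset.Ico 2 (k + 2), 8 * (((k + 1)! : ℕ) : ℚ) * (gq l + gq (k + 3 - l)) :=
              Finset.sum_le_sum hterm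
          _ = 8 * (((k + 1)! : ℕ) : ℚ) * ((∑ l ∈ Finset.Ico 2 (k + 2), gq l)
              + ∑ l ∈ Finset.Ico 2 (k + 2), gq (k + 3 - l)) := by
              rw [← Finset.mul_sum, Finset.sum_add_distrib]
          _ ≤ 16 * (((k + 1)! : ℕ) : ℚ) := by
              have hre : ∑ l ∈ Finset.Ico 2 (k + 2), gq (k + 3 - l)
                  = ∑ l ∈ Finset.Ico 2 (k + 2), gq l := by
                apply Finset.sum_nbij' (i := fun l => k + 3 - l) (j := fun l => k + 3 - l)
                  <;> intros <;> simp_all [Finset.mem_Ico] <;> omega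
              rw [hre, tele k]
              have hk : (0 : ℚ) < (k : ℚ) + 1 := by positivity
              have hfp : (0 : ℚ) < (((k + 1)! : ℕ) : ℚ) := by
                exact_mod_cast (k + 1).factorial_pos
              rw [show (16 : ℚ) * (((k + 1)! : ℕ) : ℚ)
                  = 8 * (((k + 1)! : ℕ) : ℚ) * (1 + 1) from by ring]
              apply mul_le_mul_of_nonneg_left _ (by positivity)
              have : (0 : ℚ) ≤ 1 / ((k : ℚ) + 1) := by positivity
              linarith
      exact_mod_cast hqle
    have hb : (k + 3) * k ! ≤ 3 * (k + 1)! := by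
      rw [Nat.factorial_succ]
      calc (k + 3) * k ! ≤ (3 * (k + 1)) * k ! := Nat.mul_le_mul_right _ (by omega)
        _ = 3 * ((k + 1) * k !) := by ring
    rw [hpeel, hf0, hf1, hfk2, hfk3]
    linarith [hb, hmid]
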